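/- arXiv:2005.11121 — 2 statements merged into one kernel-verified Lean document; each statement's English description precedes it below -/
import Mathlib

section
/- Let X satisfy the two-sided tail condition with index α ∈ (0,1). Then limsup_{t→0} |1 − φ(t)| / (|t|^α ℓ(1/|t|)) < ∞, where φ(t) = E e^{itX} is the characteristic function of X. -/
open MeasureTheory Filter Set Topology

noncomputable section

/-- `f` is slowly varying at infinity: `f(λx)/f(x) → 1` as `x → ∞` for every `λ > 0`. -/
def SlowlyVarying (f : ℝ → ℝ) : Prop :=
  ∀ lam : ℝ, 0 < lam → Filter.Tendsto (fun x => f (lam * x) / f x) Filter.atTop (nhds 1)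

/-- Characteristic function `φ(t) = E e^{itX}` of a random variable `X` on `(Ω, μ)`. -/
def charFn {Ω : Type*} [MeasurableSpace Ω] (μ : MeasureTheory.Measure Ω) (X : Ω → ℝ)
    (t : ℝ) : ℂ :=
  ∫ ω, Complex.exp (Complex.I * (t : ℂ) * (X ω : ℂ)) ∂μ

/-- The class `𝒫_r` of positive, bounded, right-continuous functions with positive
infimum on `[1, r]` that are multiplicatively `r`-periodic. -/
def MemP (r : ℝ) (p : ℝ → ℝ) : Prop :=
  (∀ x : ℝ, 0 < x → 0 < p x) ∧
  (∃ M : ℝ, ∀ x : ℝ, 0 < x → p x ≤ M) ∧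
  (∃ m : ℝ, 0 < m ∧ ∀ x ∈ Set.Icc (1 : ℝ) r, m ≤ p x) ∧
  (∀ x : ℝ, 0 < x → ContinuousWithinAt p (Set.Ici x) x) ∧
  (∀ x : ℝ, 0 < x → p (r * x) = p x)

/-- Renewal function `U(y) = ∑ₙ P(Sₙ ≤ y) = ∑ₙ F^{*n}(y)` of the iid sequence `X`. -/
def renewalFn {Ω : Type*} [MeasurableSpace Ω] (μ : MeasureTheory.Measure Ω)
    (X : ℕ → Ω → ℝ) (y : ℝ) : ℝ :=
  ∑' n : ℕ, (μ {ω | (∑ i ∈ Finset.range n, X i ω) ≤ y}).toReal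

/-- Truncated mean `L(x) = ∫₁ˣ P(Y > u) du`. -/
def truncTail {Ω : Type*} [MeasurableSpace Ω] (μ : MeasureTheory.Measure Ω)
    (Y : Ω → ℝ) (x : ℝ) : ℝ :=
  ∫ u in (1:ℝ)..x, (μ {ω | u < Y ω}).toReal

/-- Two-sided truncated mean `L(x) = ∫₁ˣ (P(Y > u) + P(Y ≤ -u)) du`. -/
def truncTail₂ {Ω : Type*} [MeasurableSpace Ω] (μ : MeasureTheory.Measure Ω)
    (Y : Ω → ℝ) (x : ℝ) : ℝ :=
  ∫ u in (1:ℝ)..x, ((μ {ω | u < Y ω}).toReal + (μ {ω | Y ω ≤ -u}).toReal)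

/-- Quantile function `Q(s) = inf {x : F(x) ≥ s}` of `Y`. -/
def quantileFn {Ω : Type*} [MeasurableSpace Ω] (μ : MeasureTheory.Measure Ω)
    (Y : Ω → ℝ) (s : ℝ) : ℝ :=
  sInf {x : ℝ | s ≤ (μ {ω | Y ω ≤ x}).toReal}

/-- Centering sequence `Cₙ = n ∫_{1/n}^{1-1/n} Q(s) ds`. -/
def centerSeq {Ω : Type*} [MeasurableSpace Ω] (μ : MeasureTheory.Measure Ω)
    (Y : Ω → ℝ) (n : ℕ) : ℝ :=
  (n : ℝ) * ∫ s in (1 / (n : ℝ))..(1 - 1 / (n : ℝ)), quantileFn μ Y s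

/-! `‖1 - φ(t)‖ ≤ E min(2, |tX|)`, and splitting `|tX|` at the dyadic levels `2⁻ʲ` bounds this
by `2 / 2 ^ J + ∑_{j ≤ J} 2 / 2 ^ j * P(|X| > |t|⁻¹ / 2 ^ (j + 1))`. With `g x = ℓ x * x ^ (-α)`
both tails are comparable to `g`, and slow variation gives `g (x / 2) ≤ B * g x` for large `x`
with `B < 2` (this is where `α < 1` enters), so the sum is dominated by a geometric series times
`g |t|⁻¹ = |t| ^ α * ℓ (1 / |t|)`. The splitting stops at a fixed scale `x₀`, where `g` is bounded
below, so the remainder `2 / 2 ^ J` is absorbed by the same bound. -/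

lemma norm_one_sub_exp_I_mul_le (r : ℝ) : ‖1 - Complex.exp (Complex.I * r)‖ ≤ min 2 |r| := by
  refine le_min ?_ ?_
  · calc ‖1 - Complex.exp (Complex.I * r)‖ ≤ ‖(1 : ℂ)‖ + ‖Complex.exp (Complex.I * r)‖ :=
          norm_sub_le _ _
      _ = 2 := by rw [Complex.norm_exp_I_mul_ofReal]; norm_num
  · rw [norm_sub_rev]
    exact Real.norm_exp_I_mul_ofReal_sub_one_le

lemma min_two_le_dyadic_sum (y : ℝ) (J : ℕ) :
    min 2 y ≤ 2 / 2 ^ J +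
      ∑ j ∈ Finset.range (J + 1), if 1 / 2 ^ (j + 1) < y then 2 / 2 ^ j else 0 := by
  induction J with
  | zero =>
    simp only [pow_zero, div_one, zero_add, Finset.range_one, Finset.sum_singleton]
    split_ifs <;> simp
  | succ J ih =>
    have hsum_nonneg :
        0 ≤ ∑ j ∈ Finset.range (J + 1), if 1 / 2 ^ (j + 1) < y then (2 : ℝ) / 2 ^ j else 0 :=
      Finset.sum_nonneg fun j _ => by split_ifs <;> positivity
    rw [Finset.sum_range_succ]
    split_ifs with hy
    · calc min 2 y ≤ _ := ih
        _ = _ := by rw [pow_succ]; ring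
    · calc min 2 y ≤ y := min_le_right _ _
        _ ≤ 1 / 2 ^ (J + 2) := not_lt.1 hy
        _ ≤ 2 / 2 ^ (J + 1) := by gcongr <;> norm_num
        _ ≤ _ := by linarith

lemma norm_one_sub_charFn_le_dyadic_sum {Ω : Type*} [MeasurableSpace Ω] (μ : Measure Ω)
    [IsProbabilityMeasure μ] {X : Ω → ℝ} (hX : Measurable X) {t : ℝ} (ht : t ≠ 0) (J : ℕ) :
    ‖1 - charFn μ X t‖ ≤ 2 / 2 ^ J +
      ∑ j ∈ Finset.range (J + 1), 2 / 2 ^ j * (μ {ω | |t|⁻¹ / 2 ^ (j + 1) < |X ω|}).toReal := by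
  set s : ℕ → Set Ω := fun j => {ω | |t|⁻¹ / 2 ^ (j + 1) < |X ω|}
  have hs : ∀ j, MeasurableSet (s j) := fun j => measurableSet_lt measurable_const hX.abs
  have hmem : ∀ j ω, ω ∈ s j ↔ 1 / 2 ^ (j + 1) < |t * X ω| := fun j ω => by
    rw [Set.mem_ofPred_eq, abs_mul, show |t|⁻¹ / 2 ^ (j + 1) = 1 / 2 ^ (j + 1) / |t| by ring,
      div_lt_iff₀ (abs_pos.2 ht), mul_comm]
  set bound : Ω → ℝ := fun ω => 2 / 2 ^ J + ∑ j ∈ Finset.range (J + 1),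
    (s j).indicator (fun _ => 2 / 2 ^ j) ω
  have hind : ∀ j, Integrable ((s j).indicator (fun _ => (2 : ℝ) / 2 ^ j)) μ :=
    fun j => (integrable_const _).indicator (hs j)
  have harg : ∀ ω, Complex.I * t * X ω = Complex.I * ↑(t * X ω) := fun ω => by push_cast; ring
  have hbound : ∀ ω, ‖1 - Complex.exp (Complex.I * t * X ω)‖ ≤ bound ω := fun ω => by
    rw [harg]
    refine (norm_one_sub_exp_I_mul_le _).trans ((min_two_le_dyadic_sum _ J).trans_eq ?_)
    simp only [bound, Set.indicator_apply, hmem]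
  have hexp : Integrable (fun ω => Complex.exp (Complex.I * t * X ω)) μ :=
    Integrable.of_bound (by fun_prop) 1 (Eventually.of_forall fun ω => by
      rw [harg, Complex.norm_exp_I_mul_ofReal])
  calc ‖1 - charFn μ X t‖ = ‖∫ ω, (1 - Complex.exp (Complex.I * t * X ω)) ∂μ‖ := by
        rw [integral_sub (integrable_const 1) hexp, integral_const, probReal_univ, one_smul,
          charFn]
    _ ≤ ∫ ω, ‖1 - Complex.exp (Complex.I * t * X ω)‖ ∂μ := norm_integral_le_integral_norm _
    _ ≤ ∫ ω, bound ω ∂μ := integral_mono_of_nonneg (Eventually.of_forall fun _ => norm_nonneg _)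
        ((integrable_const _).add (integrable_finsetSum _ fun j _ => hind j))
        (Eventually.of_forall hbound)
    _ = _ := by
        simp only [bound]
        rw [integral_add (integrable_const _) (integrable_finsetSum _ fun j _ => hind j),
          integral_const, integral_finsetSum _ fun j _ => hind j, probReal_univ, one_smul]
        congr 1
        refine Finset.sum_congr rfl fun j _ => ?_
        rw [integral_indicator_const _ (hs j), measureReal_def, smul_eq_mul, mul_comm]

lemma le_pow_mul_of_le_mul_two {g : ℝ → ℝ} {B x₀ : ℝ} (hB : 0 ≤ B) (hx₀ : 0 ≤ x₀)
    (hg : ∀ y, x₀ ≤ y → g y ≤ B * g (2 * y)) (n : ℕ) {x : ℝ} (hx : x₀ ≤ x / 2 ^ n) :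
    g (x / 2 ^ n) ≤ B ^ n * g x := by
  induction n with
  | zero => simp
  | succ n ih =>
    have hx_nonneg : 0 ≤ x := by
      have := mul_nonneg (hx₀.trans hx) (pow_nonneg zero_le_two (n + 1))
      rwa [div_mul_cancel₀ _ (by positivity)] at this
    have hx' : x₀ ≤ x / 2 ^ n :=
      hx.trans (div_le_div_of_nonneg_left hx_nonneg (by positivity)
        (pow_le_pow_right₀ one_le_two n.le_succ))
    calc g (x / 2 ^ (n + 1)) ≤ B * g (2 * (x / 2 ^ (n + 1))) := hg _ hx
      _ = B * g (x / 2 ^ n) := by rw [pow_succ]; field_simp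
      _ ≤ B * (B ^ n * g x) := by gcongr; exact ih hx'
      _ = B ^ (n + 1) * g x := by ring

lemma sum_two_div_pow_mul_le {a : ℕ → ℝ} {M B G : ℝ} {n : ℕ} (hM : 0 ≤ M) (hB₀ : 0 ≤ B)
    (hB₂ : B < 2) (hG : 0 ≤ G) (ha : ∀ j ∈ Finset.range n, a j ≤ M * (B ^ (j + 1) * G)) :
    ∑ j ∈ Finset.range n, 2 / 2 ^ j * a j ≤ 2 * M * B / (1 - B / 2) * G := by
  have hgeom : ∑ j ∈ Finset.range n, (B / 2) ^ j ≤ 1 / (1 - B / 2) := by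
    have := geom_sum_Ico_le_of_lt_one (m := 0) (n := n) (by positivity : 0 ≤ B / 2)
      (by linarith)
    rwa [← Finset.range_eq_Ico, pow_zero] at this
  calc ∑ j ∈ Finset.range n, 2 / 2 ^ j * a j
      ≤ ∑ j ∈ Finset.range n, 2 * M * B * G * (B / 2) ^ j :=
        Finset.sum_le_sum fun j hj => (mul_le_mul_of_nonneg_left (ha j hj) (by positivity)).trans_eq
          (by rw [div_pow, pow_succ]; ring)
    _ = 2 * M * B * G * ∑ j ∈ Finset.range n, (B / 2) ^ j := by rw [Finset.mul_sum]
    _ ≤ 2 * M * B * G * (1 / (1 - B / 2)) := by gcongr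
    _ = _ := by ring

lemma norm_one_sub_charFn_le_of_tail_le {Ω : Type*} [MeasurableSpace Ω] (μ : Measure Ω)
    [IsProbabilityMeasure μ] {X : Ω → ℝ} (hX : Measurable X) {g : ℝ → ℝ} {M B c x₀ : ℝ}
    (hM : 0 ≤ M) (hB₀ : 0 ≤ B) (hB₂ : B < 2) (hc : 0 < c) (hx₀ : 0 < x₀)
    (htail : ∀ u, x₀ ≤ u → (μ {ω | u < |X ω|}).toReal ≤ M * g u)
    (hdouble : ∀ y, x₀ ≤ y → g y ≤ B * g (2 * y))
    (hlow : ∀ u ∈ Ico x₀ (2 * x₀), c ≤ g u) {t : ℝ} (ht : t ≠ 0) (htx₀ : 2 * x₀ ≤ |t|⁻¹) :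
    ‖1 - charFn μ X t‖ ≤ (2 * M * B / (1 - B / 2) + 2 * B / c) * g |t|⁻¹ := by
  set x := |t|⁻¹
  obtain ⟨J, hJ, hJ'⟩ := exists_nat_pow_near ((one_le_div₀ (by positivity)).2 htx₀) one_lt_two
  rw [le_div_iff₀ (by positivity)] at hJ
  rw [div_lt_iff₀ (by positivity), pow_succ] at hJ'
  have hscale : ∀ j ≤ J + 1, x₀ ≤ x / 2 ^ j := fun j hj => by
    rw [le_div_iff₀ (by positivity)]
    calc x₀ * 2 ^ j ≤ x₀ * 2 ^ (J + 1) := by gcongr; norm_num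
      _ ≤ x := by rw [pow_succ]; linarith
  have hbottom : c ≤ B ^ (J + 1) * g x := by
    refine (hlow _ ⟨hscale _ le_rfl, ?_⟩).trans (le_pow_mul_of_le_mul_two hB₀ hx₀.le hdouble _
      (hscale _ le_rfl))
    rw [div_lt_iff₀ (by positivity), pow_succ]; linarith
  have hgx : 0 ≤ g x := by
    by_contra! hneg
    have : B ^ (J + 1) * g x ≤ 0 := mul_nonpos_of_nonneg_of_nonpos (by positivity) hneg.le
    linarith
  have hsum := sum_two_div_pow_mul_le (n := J + 1) hM hB₀ hB₂ hgx fun j hj => by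
    have hj := hscale (j + 1) (by simp at hj; omega)
    exact (htail _ hj).trans (by gcongr; exact le_pow_mul_of_le_mul_two hB₀ hx₀.le hdouble _ hj)
  have hrem : 2 / 2 ^ J ≤ 2 * B / c * g x := by
    rw [div_mul_eq_mul_div, le_div_iff₀ hc]
    calc 2 / 2 ^ J * c ≤ 2 / 2 ^ J * (B ^ (J + 1) * g x) := by gcongr
      _ = 2 * B * g x * (B / 2) ^ J := by rw [div_pow, pow_succ]; ring
      _ ≤ 2 * B * g x * 1 := by gcongr; exact pow_le_one₀ (by positivity) (by linarith)
      _ = _ := by ring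
  calc ‖1 - charFn μ X t‖ ≤ _ := norm_one_sub_charFn_le_dyadic_sum μ hX ht J
    _ ≤ 2 * B / c * g x + 2 * M * B / (1 - B / 2) * g x := add_le_add hrem hsum
    _ = _ := by ring

theorem isBigO_one_sub_charFn_of_tail_le {Ω : Type*} [MeasurableSpace Ω] (μ : Measure Ω)
    [IsProbabilityMeasure μ] {X : Ω → ℝ} (hX : Measurable X) {g : ℝ → ℝ} {M B c x₀ : ℝ}
    (hM : 0 ≤ M) (hB₀ : 0 ≤ B) (hB₂ : B < 2) (hc : 0 < c) (hx₀ : 0 < x₀)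
    (htail : ∀ u, x₀ ≤ u → (μ {ω | u < |X ω|}).toReal ≤ M * g u)
    (hdouble : ∀ y, x₀ ≤ y → g y ≤ B * g (2 * y))
    (hlow : ∀ u ∈ Ico x₀ (2 * x₀), c ≤ g u) :
    (fun t => 1 - charFn μ X t) =O[𝓝[≠] 0] fun t => g |t|⁻¹ := by
  refine Asymptotics.IsBigO.of_bound (2 * M * B / (1 - B / 2) + 2 * B / c) ?_
  have hC : 0 ≤ 2 * M * B / (1 - B / 2) + 2 * B / c := by
    have : 0 < 1 - B / 2 := by linarith
    positivity
  filter_upwards [self_mem_nhdsWithin,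
    (tendsto_inv_nhdsGT_zero.comp tendsto_abs_nhdsNE_zero).eventually_ge_atTop (2 * x₀)]
    with t ht htx₀
  exact (norm_one_sub_charFn_le_of_tail_le μ hX hM hB₀ hB₂ hc hx₀ htail hdouble hlow ht htx₀).trans
    (mul_le_mul_of_nonneg_left (Real.le_norm_self _) hC)

lemma measure_lt_abs_le_add {Ω : Type*} [MeasurableSpace Ω] (μ : Measure Ω) [IsFiniteMeasure μ]
    (X : Ω → ℝ) (u : ℝ) :
    (μ {ω | u < |X ω|}).toReal ≤ (μ {ω | u < X ω}).toReal + (μ {ω | X ω ≤ -u}).toReal := by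
  refine (measureReal_mono fun ω hω => ?_).trans (measureReal_union_le _ _)
  rcases le_or_gt 0 (X ω) with hX | hX
  · exact Or.inl (by simpa [abs_of_nonneg hX] using hω)
  · exact Or.inr (by simp only [Set.mem_ofPred_eq, abs_of_neg hX] at hω ⊢; linarith)

lemma antitone_two_sided_tail {Ω : Type*} [MeasurableSpace Ω] (μ : Measure Ω) [IsFiniteMeasure μ]
    (X : Ω → ℝ) :
    Antitone fun u => (μ {ω | u < X ω}).toReal + (μ {ω | X ω ≤ -u}).toReal := fun u v huv =>
  add_le_add (measureReal_mono fun ω hω => huv.trans_lt hω)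
    (measureReal_mono fun ω (hω : X ω ≤ -v) => hω.trans (neg_le_neg huv))

lemma SlowlyVarying.eventually_le_mul_two {ℓ : ℝ → ℝ} (hℓ : SlowlyVarying ℓ)
    (hpos : ∀ x, 0 < x → 0 < ℓ x) {A : ℝ} (hA : 1 < A) : ∀ᶠ y in atTop, ℓ y ≤ A * ℓ (2 * y) := by
  have := (hℓ 2⁻¹ (by norm_num)).comp (tendsto_id.const_mul_atTop two_pos)
  filter_upwards [this.eventually_lt_const hA, eventually_gt_atTop 0] with y hy hy₀
  simp only [Function.comp_apply, id, inv_mul_cancel_left₀ (two_ne_zero' ℝ)] at hy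
  rw [div_lt_iff₀ (hpos _ (by positivity))] at hy
  exact hy.le

lemma SlowlyVarying.eventually_mul_rpow_neg_le {ℓ : ℝ → ℝ} (hℓ : SlowlyVarying ℓ)
    (hpos : ∀ x, 0 < x → 0 < ℓ x) {α B : ℝ} (hB : (2 : ℝ) ^ α < B) :
    ∀ᶠ y in atTop, ℓ y * y ^ (-α) ≤ B * (ℓ (2 * y) * (2 * y) ^ (-α)) := by
  have h2α : (0 : ℝ) < 2 ^ α := by positivity
  filter_upwards [hℓ.eventually_le_mul_two hpos ((one_lt_div h2α).2 hB), eventually_gt_atTop 0]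
    with y hy hy₀
  calc ℓ y * y ^ (-α) ≤ B / 2 ^ α * ℓ (2 * y) * y ^ (-α) := by gcongr
    _ = B * (ℓ (2 * y) * (2 * y) ^ (-α)) := by
      rw [Real.mul_rpow zero_le_two hy₀.le, Real.rpow_neg zero_le_two]
      field_simp

def ZeroOrBoundedPos (h : ℝ → ℝ) : Prop :=
  (∀ x : ℝ, 0 < x → h x = 0) ∨
    ((∃ m : ℝ, 0 < m ∧ ∀ x : ℝ, 0 < x → m ≤ h x) ∧ (∃ M : ℝ, ∀ x : ℝ, 0 < x → h x ≤ M))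

lemma ZeroOrBoundedPos.exists_bounds_add {h k : ℝ → ℝ} (hh : ZeroOrBoundedPos h)
    (hk : ZeroOrBoundedPos k) (hnz : ¬ ((∀ x : ℝ, 0 < x → h x = 0) ∧ (∀ x : ℝ, 0 < x → k x = 0))) :
    ∃ m M : ℝ, 0 < m ∧ ∀ x, 0 < x → m ≤ h x + k x ∧ h x + k x ≤ M := by
  rcases hh with hh | ⟨⟨mh, hmh, hmh'⟩, Mh, hMh⟩ <;>
    rcases hk with hk | ⟨⟨mk, hmk, hmk'⟩, Mk, hMk⟩
  · exact absurd ⟨hh, hk⟩ hnz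
  · exact ⟨mk, Mk, hmk, fun x hx => by simp only [hh x hx, zero_add]; exact ⟨hmk' x hx, hMk x hx⟩⟩
  · exact ⟨mh, Mh, hmh, fun x hx => by simp only [hk x hx, add_zero]; exact ⟨hmh' x hx, hMh x hx⟩⟩
  · exact ⟨mh + mk, Mh + Mk, by positivity, fun x hx =>
      ⟨add_le_add (hmh' x hx) (hmk' x hx), add_le_add (hMh x hx) (hMk x hx)⟩⟩

theorem statement0
    {Ω : Type*} [MeasurableSpace Ω] (μ : MeasureTheory.Measure Ω) [IsProbabilityMeasure μ]
    (X : Ω → ℝ) (hXm : Measurable X)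
    (α : ℝ) (hα : α ∈ Set.Ioo (0:ℝ) 1)
    (ℓ h k : ℝ → ℝ)
    (hℓ : SlowlyVarying ℓ) (hℓpos : ∀ x : ℝ, 0 < x → 0 < ℓ x)
    (hh : (∀ x : ℝ, 0 < x → h x = 0) ∨
      ((∃ m : ℝ, 0 < m ∧ ∀ x : ℝ, 0 < x → m ≤ h x) ∧ (∃ M : ℝ, ∀ x : ℝ, 0 < x → h x ≤ M)))
    (hk : (∀ x : ℝ, 0 < x → k x = 0) ∨
      ((∃ m : ℝ, 0 < m ∧ ∀ x : ℝ, 0 < x → m ≤ k x) ∧ (∃ M : ℝ, ∀ x : ℝ, 0 < x → k x ≤ M)))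
    (hnz : ¬ ((∀ x : ℝ, 0 < x → h x = 0) ∧ (∀ x : ℝ, 0 < x → k x = 0)))
    (htailR : ∀ x : ℝ, 0 < x → (μ {ω | x < X ω}).toReal = ℓ x * x ^ (-α) * h x)
    (htailL : ∀ x : ℝ, 0 < x → (μ {ω | X ω ≤ -x}).toReal = ℓ x * x ^ (-α) * k x)
 :
    ∃ C : ℝ, ∀ᶠ t : ℝ in 𝓝[≠] (0:ℝ),
      ‖1 - charFn μ X t‖ / (|t| ^ α * ℓ (1 / |t|)) ≤ C := by
  obtain ⟨m, M, hm, hhk⟩ := ZeroOrBoundedPos.exists_bounds_add hh hk hnz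
  have hM : 0 < M := hm.trans_le ((hhk 1 one_pos).1.trans (hhk 1 one_pos).2)
  set g : ℝ → ℝ := fun y => ℓ y * y ^ (-α)
  have hg : ∀ y, 0 < y → 0 < g y := fun y hy => by have := hℓpos y hy; positivity
  set T : ℝ → ℝ := fun u => (μ {ω | u < X ω}).toReal + (μ {ω | X ω ≤ -u}).toReal
  have hT : ∀ u, 0 < u → m * g u ≤ T u ∧ T u ≤ M * g u := fun u hu => by
    have hTu : T u = (h u + k u) * g u := by simp only [T, g, htailR u hu, htailL u hu]; ring
    rw [hTu]
    exact ⟨by gcongr; exacts [(hg u hu).le, (hhk u hu).1],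
      by gcongr; exacts [(hg u hu).le, (hhk u hu).2]⟩
  obtain ⟨B, hαB, hB2⟩ : ∃ B, (2 : ℝ) ^ α < B ∧ B < 2 := exists_between <| by
    simpa using Real.rpow_lt_rpow_of_exponent_lt one_lt_two hα.2
  obtain ⟨x₀, hx₀⟩ := eventually_atTop.1
    ((hℓ.eventually_mul_rpow_neg_le hℓpos hαB).and (eventually_gt_atTop 0))
  have hx₀pos : 0 < x₀ := (hx₀ x₀ le_rfl).2
  have hlow : ∀ u ∈ Ico x₀ (2 * x₀), m * g (2 * x₀) / M ≤ g u := fun u hu => by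
    rw [div_le_iff₀' hM]
    exact (hT _ (by positivity)).1.trans
      ((antitone_two_sided_tail μ X hu.2.le).trans (hT u (hx₀pos.trans_le hu.1)).2)
  obtain ⟨C, hC⟩ := (isBigO_one_sub_charFn_of_tail_le μ hXm hM.le
    ((by positivity : (0 : ℝ) < 2 ^ α).le.trans hαB.le) hB2
    (by have := hg (2 * x₀) (by positivity); positivity) hx₀pos
    (fun u hu => (measure_lt_abs_le_add μ X u).trans (hT u (hx₀pos.trans_le hu)).2)
    (fun y hy => (hx₀ y hy).1) hlow).bound
  refine ⟨C, ?_⟩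
  filter_upwards [hC, self_mem_nhdsWithin] with t hCt ht
  have hgt := hg |t|⁻¹ (by simpa using ht)
  have hden : |t| ^ α * ℓ (1 / |t|) = g |t|⁻¹ := by
    simp only [g, one_div, Real.rpow_neg (inv_nonneg.2 (abs_nonneg t)),
      Real.inv_rpow (abs_nonneg t), inv_inv, mul_comm]
  rwa [hden, div_le_iff₀ hgt, ← Real.norm_of_nonneg hgt.le]
end
end

section
/- Let X satisfy the two-sided tail condition with index α ∈ (0,2). Then liminf_{t→0} Re(1 − φ(t)) / (|t|^α ℓ(1/|t|)) > 0. -/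
open MeasureTheory Filter Set Topology

noncomputable section

/-
Write `T = 1/|t|`. Since `1 - cos u ≥ (2/π²) u²` for `|u| ≤ π`, the real part
`∫ (1 - cos (t X))` is at least `(2/π²) ε²` times the mass of the annulus `ε T ≤ |X| ≤ T`, and
that mass is at least the drop `G(εT) - G(T)` of the two-sided tail
`G(x) = P(X > x) + P(X ≤ -x) = ℓ(x) x^{-α} (h + k)(x)`. As `h + k` is pinched between constants
`0 < m ≤ M`, the choice `ε^{-α} = 4M/m` together with `ℓ(εT) ≥ ℓ(T)/2` for large `T` gives
`G(εT) ≥ 2 M ℓ(T) T^{-α}`, while `G(T) ≤ M ℓ(T) T^{-α}`.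
-/

open MeasureTheory Filter Set Topology Real

lemma exists_nonneg_le_of_eq_zero_or_bounded {f : ℝ → ℝ}
    (hf : (∀ x : ℝ, 0 < x → f x = 0) ∨
      ((∃ m : ℝ, 0 < m ∧ ∀ x : ℝ, 0 < x → m ≤ f x) ∧ (∃ M : ℝ, ∀ x : ℝ, 0 < x → f x ≤ M))) :
    ∃ M : ℝ, ∀ x : ℝ, 0 < x → 0 ≤ f x ∧ f x ≤ M := by
  rcases hf with hf0 | ⟨⟨m, hm, hmf⟩, M, hfM⟩
  · exact ⟨0, fun x hx => by simp [hf0 x hx]⟩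
  · exact ⟨M, fun x hx => ⟨hm.le.trans (hmf x hx), hfM x hx⟩⟩

lemma exists_pos_le_add_le {h k : ℝ → ℝ}
    (hh : (∀ x : ℝ, 0 < x → h x = 0) ∨
      ((∃ m : ℝ, 0 < m ∧ ∀ x : ℝ, 0 < x → m ≤ h x) ∧ (∃ M : ℝ, ∀ x : ℝ, 0 < x → h x ≤ M)))
    (hk : (∀ x : ℝ, 0 < x → k x = 0) ∨
      ((∃ m : ℝ, 0 < m ∧ ∀ x : ℝ, 0 < x → m ≤ k x) ∧ (∃ M : ℝ, ∀ x : ℝ, 0 < x → k x ≤ M)))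
    (hnz : ¬ ((∀ x : ℝ, 0 < x → h x = 0) ∧ (∀ x : ℝ, 0 < x → k x = 0))) :
    ∃ m M : ℝ, 0 < m ∧ ∀ x : ℝ, 0 < x → m ≤ h x + k x ∧ h x + k x ≤ M := by
  obtain ⟨Mh, hMh⟩ := exists_nonneg_le_of_eq_zero_or_bounded hh
  obtain ⟨Mk, hMk⟩ := exists_nonneg_le_of_eq_zero_or_bounded hk
  obtain ⟨m, hm, hmhk⟩ : ∃ m : ℝ, 0 < m ∧ ∀ x : ℝ, 0 < x → m ≤ h x + k x := by
    rcases hh with hh0 | ⟨⟨m, hm, hmh⟩, -⟩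
    · rcases hk with hk0 | ⟨⟨m, hm, hmk⟩, -⟩
      · exact absurd ⟨hh0, hk0⟩ hnz
      · exact ⟨m, hm, fun x hx => by linarith [hh0 x hx, hmk x hx]⟩
    · exact ⟨m, hm, fun x hx => by linarith [hmh x hx, (hMk x hx).1]⟩
  exact ⟨m, Mh + Mk, hm, fun x hx => ⟨hmhk x hx, by linarith [(hMh x hx).2, (hMk x hx).2]⟩⟩

lemma SlowlyVarying.exists_le_sub {ℓ g G : ℝ → ℝ} {α m M : ℝ} (hℓ : SlowlyVarying ℓ)
    (hℓpos : ∀ x : ℝ, 0 < x → 0 < ℓ x) (hα : 0 < α) (hm : 0 < m)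
    (hg : ∀ x : ℝ, 0 < x → m ≤ g x ∧ g x ≤ M)
    (hG : ∀ x : ℝ, 0 < x → G x = ℓ x * x ^ (-α) * g x) :
    ∃ ε : ℝ, 0 < ε ∧ ∀ᶠ x in atTop, M * (ℓ x * x ^ (-α)) ≤ G (ε * x) - G x := by
  have hM : 0 < M := hm.trans_le ((hg 1 one_pos).1.trans (hg 1 one_pos).2)
  set ε : ℝ := (m / (4 * M)) ^ α⁻¹
  have hε : 0 < ε := by positivity
  have hεα : ε ^ (-α) = 4 * M / m := by
    rw [rpow_neg hε.le, ← rpow_mul (by positivity), inv_mul_cancel₀ hα.ne', rpow_one, inv_div]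
  refine ⟨ε, hε, ?_⟩
  filter_upwards [(hℓ ε hε).eventually (eventually_ge_nhds one_half_lt_one),
    eventually_gt_atTop 0] with x hℓx hx
  have hℓx0 := hℓpos x hx
  have hℓεx : ℓ x / 2 ≤ ℓ (ε * x) := by
    rw [le_div_iff₀ hℓx0] at hℓx
    linarith
  have hxα : 0 < x ^ (-α) := by positivity
  have hGεx : 2 * M * (ℓ x * x ^ (-α)) ≤ G (ε * x) := calc
    2 * M * (ℓ x * x ^ (-α)) = ℓ x / 2 * (ε ^ (-α) * x ^ (-α)) * m := by
        rw [hεα]; field_simp; ring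
    _ ≤ ℓ (ε * x) * (ε * x) ^ (-α) * g (ε * x) := by
        rw [mul_rpow hε.le hx.le]
        have hℓεx0 := hℓpos _ (mul_pos hε hx)
        gcongr
        exact (hg _ (mul_pos hε hx)).1
    _ = G (ε * x) := (hG _ (by positivity)).symm
  have hGx : G x ≤ M * (ℓ x * x ^ (-α)) := calc
    G x = ℓ x * x ^ (-α) * g x := hG x hx
    _ ≤ ℓ x * x ^ (-α) * M := by gcongr; exact (hg x hx).2
    _ = M * (ℓ x * x ^ (-α)) := mul_comm _ _
  linarith

section

variable {Ω : Type*} [MeasurableSpace Ω] {μ : Measure Ω} {X : Ω → ℝ}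

lemma integrable_cos_mul [IsFiniteMeasure μ] (hX : Measurable X) (t : ℝ) :
    Integrable (fun ω => cos (t * X ω)) μ :=
  Integrable.of_bound (by fun_prop) 1 (Eventually.of_forall fun _ => by
    simpa using abs_cos_le_one _)

lemma re_one_sub_charFn [IsProbabilityMeasure μ] (hX : Measurable X) (t : ℝ) :
    (1 - charFn μ X t).re = ∫ ω, (1 - cos (t * X ω)) ∂μ := by
  have hexp : ∀ ω, Complex.exp (Complex.I * t * X ω) = Complex.exp ((t * X ω : ℝ) * Complex.I) :=
    fun ω => by push_cast; ring_nf
  have hint : Integrable (fun ω => Complex.exp (Complex.I * t * X ω)) μ :=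
    Integrable.of_bound (by fun_prop) 1 (Eventually.of_forall fun ω => by
      rw [hexp, Complex.norm_exp_ofReal_mul_I])
  rw [integral_sub (integrable_const 1) (integrable_cos_mul hX t), integral_const, Complex.sub_re,
    Complex.one_re, charFn, ← RCLike.re_to_complex, ← integral_re hint]
  simp only [hexp, RCLike.re_to_complex, Complex.exp_ofReal_mul_I_re, probReal_univ, smul_eq_mul,
    mul_one]

lemma mul_measureReal_le_re_one_sub_charFn [IsProbabilityMeasure μ] (hX : Measurable X)
    {t ε : ℝ} (ht : t ≠ 0) (hε : 0 ≤ ε) :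
    2 / π ^ 2 * ε ^ 2 * μ.real {ω | |X ω| ∈ Icc (ε / |t|) (1 / |t|)} ≤
      (1 - charFn μ X t).re := by
  set A := {ω | |X ω| ∈ Icc (ε / |t|) (1 / |t|)}
  have hA : MeasurableSet A := hX.abs measurableSet_Icc
  have ht0 : 0 < |t| := abs_pos.2 ht
  have hbound : A.indicator (fun _ => 2 / π ^ 2 * ε ^ 2) ≤ fun ω => 1 - cos (t * X ω) := by
    intro ω
    by_cases hω : ω ∈ A
    · rw [indicator_of_mem hω]
      obtain ⟨hεX, hX1⟩ := hω
      rw [div_le_iff₀ ht0] at hεX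
      rw [le_div_iff₀ ht0] at hX1
      have htX : |t * X ω| ≤ π := by rw [abs_mul]; linarith [pi_gt_three]
      have hεtX : ε ^ 2 ≤ (t * X ω) ^ 2 := by
        rw [← sq_abs (t * X ω), abs_mul]; gcongr; linarith
      calc 2 / π ^ 2 * ε ^ 2 ≤ 2 / π ^ 2 * (t * X ω) ^ 2 := by gcongr
        _ ≤ 1 - cos (t * X ω) := by linarith [cos_le_one_sub_mul_cos_sq htX]
    · rw [indicator_of_notMem hω]
      exact sub_nonneg.2 (cos_le_one _)
  rw [re_one_sub_charFn hX, mul_comm, ← smul_eq_mul, ← integral_indicator_const _ hA]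
  exact integral_mono ((integrable_const _).indicator hA)
    ((integrable_const 1).sub (integrable_cos_mul hX t)) hbound

lemma tails_sub_tails_le_measureReal_abs_mem_Icc [IsFiniteMeasure μ] (hX : Measurable X)
    {a : ℝ} (ha : 0 < a) (b : ℝ) :
    (μ.real {ω | a < X ω} + μ.real {ω | X ω ≤ -a}) -
        (μ.real {ω | b < X ω} + μ.real {ω | X ω ≤ -b}) ≤
      μ.real {ω | |X ω| ∈ Icc a b} := by
  set R := {ω | a < X ω} \ {ω | b < X ω}
  set L := {ω | X ω ≤ -a} \ {ω | X ω ≤ -b}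
  have hL : MeasurableSet L := (hX measurableSet_Iic).diff (hX measurableSet_Iic)
  have hRL : Disjoint R L := disjoint_left.2 fun ω hR hL => by
    linarith [show a < X ω from hR.1, show X ω ≤ -a from hL.1]
  have hsub : R ∪ L ⊆ {ω | |X ω| ∈ Icc a b} := by
    rintro ω (⟨h1, h2⟩ | ⟨h1, h2⟩) <;> simp only [mem_ofPred_eq, not_lt, not_le] at h1 h2 ⊢
    · rw [abs_of_pos (ha.trans h1)]
      exact ⟨h1.le, h2⟩
    · rw [abs_of_neg (by linarith)]
      constructor <;> linarith
  calc _ = (μ.real {ω | a < X ω} - μ.real {ω | b < X ω}) +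
        (μ.real {ω | X ω ≤ -a} - μ.real {ω | X ω ≤ -b}) := by ring
    _ ≤ μ.real R + μ.real L := add_le_add le_measureReal_sdiff le_measureReal_sdiff
    _ = μ.real (R ∪ L) := (measureReal_union hRL hL).symm
    _ ≤ _ := measureReal_mono hsub

end

theorem statement6
    {Ω : Type*} [MeasurableSpace Ω] (μ : MeasureTheory.Measure Ω) [IsProbabilityMeasure μ]
    (X : Ω → ℝ) (hXm : Measurable X)
    (α : ℝ) (hα : α ∈ Set.Ioo (0:ℝ) 2)
    (ℓ h k : ℝ → ℝ)
    (hℓ : SlowlyVarying ℓ) (hℓpos : ∀ x : ℝ, 0 < x → 0 < ℓ x)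
    (hh : (∀ x : ℝ, 0 < x → h x = 0) ∨
      ((∃ m : ℝ, 0 < m ∧ ∀ x : ℝ, 0 < x → m ≤ h x) ∧ (∃ M : ℝ, ∀ x : ℝ, 0 < x → h x ≤ M)))
    (hk : (∀ x : ℝ, 0 < x → k x = 0) ∨
      ((∃ m : ℝ, 0 < m ∧ ∀ x : ℝ, 0 < x → m ≤ k x) ∧ (∃ M : ℝ, ∀ x : ℝ, 0 < x → k x ≤ M)))
    (hnz : ¬ ((∀ x : ℝ, 0 < x → h x = 0) ∧ (∀ x : ℝ, 0 < x → k x = 0)))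
    (htailR : ∀ x : ℝ, 0 < x → (μ {ω | x < X ω}).toReal = ℓ x * x ^ (-α) * h x)
    (htailL : ∀ x : ℝ, 0 < x → (μ {ω | X ω ≤ -x}).toReal = ℓ x * x ^ (-α) * k x)
 :
    ∃ c : ℝ, 0 < c ∧ ∀ᶠ t : ℝ in 𝓝[≠] (0:ℝ),
      c ≤ (1 - charFn μ X t).re / (|t| ^ α * ℓ (1 / |t|)) := by
  obtain ⟨m, M, hm, hhk⟩ := exists_pos_le_add_le hh hk hnz
  have hM : 0 < M := hm.trans_le ((hhk 1 one_pos).1.trans (hhk 1 one_pos).2)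
  set G : ℝ → ℝ := fun x => μ.real {ω | x < X ω} + μ.real {ω | X ω ≤ -x}
  have hG : ∀ x : ℝ, 0 < x → G x = ℓ x * x ^ (-α) * (h x + k x) := fun x hx => by
    simp only [G, measureReal_def, htailR x hx, htailL x hx]; ring
  obtain ⟨ε, hε, hGε⟩ := hℓ.exists_le_sub hℓpos hα.1 hm hhk hG
  have hinv : Tendsto (fun t : ℝ => 1 / |t|) (𝓝[≠] 0) atTop := by
    simpa only [one_div, Function.comp_def] using
      tendsto_inv_nhdsGT_zero.comp tendsto_abs_nhdsNE_zero
  refine ⟨2 / π ^ 2 * ε ^ 2 * M, by positivity, ?_⟩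
  filter_upwards [hinv.eventually hGε, self_mem_nhdsWithin] with t hGt ht
  have ht0 : 0 < |t| := abs_pos.2 ht
  have hℓt := hℓpos _ (one_div_pos.2 ht0)
  rw [le_div_iff₀ (by positivity)]
  calc 2 / π ^ 2 * ε ^ 2 * M * (|t| ^ α * ℓ (1 / |t|))
      = 2 / π ^ 2 * ε ^ 2 * (M * (ℓ (1 / |t|) * (1 / |t|) ^ (-α))) := by
        rw [one_div, inv_rpow ht0.le, rpow_neg ht0.le, inv_inv]; ring
    _ ≤ 2 / π ^ 2 * ε ^ 2 * (G (ε * (1 / |t|)) - G (1 / |t|)) := by gcongr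
    _ ≤ 2 / π ^ 2 * ε ^ 2 * μ.real {ω | |X ω| ∈ Icc (ε / |t|) (1 / |t|)} := by
        gcongr
        rw [mul_one_div]
        exact tails_sub_tails_le_measureReal_abs_mem_Icc hXm (by positivity) _
    _ ≤ (1 - charFn μ X t).re := mul_measureReal_le_re_one_sub_charFn hXm ht hε.le
end
end
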